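/- arXiv:1107.2776 — 7 statements merged into one kernel-verified Lean document; each statement's English description precedes it below -/
import Mathlib

section
/- The polynomial X^5 + 11X^4 + 33X^3 - 121X - 121 divides the 11-division polynomial of the elliptic curve Y^2 + 11Y = X^3 + 11X^2 + 33X. -/
/-!
Unwinding the elliptic divisibility recursion expresses `ψ₁₁` through `ψ₂²`, `ψ₃` and `ψ₄`,
which are explicit in the coefficients of the curve. The divisibility is then a polynomial
identity whose cofactor, of degree 55, is found by long division.
-/

open Polynomial

namespace WeierstrassCurve

variable {R : Type*} [CommRing R] (W : WeierstrassCurve R)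

lemma preΨ'_five : W.preΨ' 5 = W.preΨ₄ * W.Ψ₂Sq ^ 2 - W.Ψ₃ ^ 3 := by
  simpa using W.preΨ'_odd 0

lemma preΨ'_six : W.preΨ' 6 = W.Ψ₃ * W.preΨ' 5 - W.Ψ₃ * W.preΨ₄ ^ 2 := by
  simpa using W.preΨ'_even 0

lemma preΨ'_seven : W.preΨ' 7 = W.preΨ' 5 * W.Ψ₃ ^ 3 - W.preΨ₄ ^ 3 * W.Ψ₂Sq ^ 2 := by
  simpa using W.preΨ'_odd 1

lemma preΨ'_eleven :
    W.preΨ' 11 = W.preΨ' 7 * W.preΨ' 5 ^ 3 - W.preΨ₄ * W.preΨ' 6 ^ 3 * W.Ψ₂Sq ^ 2 := by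
  simpa [show ¬Even 3 by decide] using W.preΨ'_odd 3

end WeierstrassCurve

open WeierstrassCurve

noncomputable def elevenDivisionCofactor : ℚ[X] :=
  11 * X ^ 55 + 2299 * X ^ 54 + 215622 * X ^ 53 + 12479456 * X ^ 52 + 510897695 * X ^ 51 +
    16023300733 * X ^ 50 + 407772113144 * X ^ 49 + 8849756798377 * X ^ 48 +
    171770186075312 * X ^ 47 + 3109219406878178 * X ^ 46 + 53823708149117709 * X ^ 45 +
    892197660944270538 * X ^ 44 + 13937389450681066876 * X ^ 43 + 201225496317327905104 * X ^ 42 +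
    2647005792428266488417 * X ^ 41 + 31484400148504337186097 * X ^ 40 +
    337736435816449858047288 * X ^ 39 + 3268688723133719028791219 * X ^ 38 +
    28597331977271190488398747 * X ^ 37 + 226764778102322794214187538 * X ^ 36 +
    1634407485663608935953878204 * X ^ 35 + 10737557135814001008402174332 * X ^ 34 +
    64472434497335839020458945456 * X ^ 33 + 354684647786635722410093089719 * X ^ 32 +
    1791800962343403178975884126336 * X ^ 31 + 8329029125300822648142442907821 * X ^ 30 +
    35688734093349824311712722123905 * X ^ 29 + 141178743857816384046644785899739 * X ^ 28 +
    516260423215036125313878817654797 * X ^ 27 + 1746927803602432240983599452063127 * X ^ 26 +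
    5474081462550424825157871478681699 * X ^ 25 + 15891738381273095281251511854239828 * X ^ 24 +
    42747466675349180714890726379051269 * X ^ 23 + 106521119936132224893003111513154418 * X ^ 22 +
    245753359214366291137611812325214313 * X ^ 21 + 524434184262035272152055215108476312 * X ^ 20 +
    1033786290500325301501620087354468297 * X ^ 19 +
    1879162058833685763864966428173676384 * X ^ 18 +
    3143075930286237095889880024020156668 * X ^ 17 +
    4824749840834433568012933007056185400 * X ^ 16 +
    6776274187058846956111488314308442619 * X ^ 15 +
    8676500184111454145126610905479087172 * X ^ 14 +
    10086043236881885276985729559493486211 * X ^ 13 +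
    10592667110354431520778122660887020251 * X ^ 12 +
    9993605590544458593245992282322392533 * X ^ 11 +
    8412915652483959842256475886990068818 * X ^ 10 + 6268731881419516370498646780062444130 * X ^ 9 +
    4094200804622791497702544622796585000 * X ^ 8 + 2315477733715082167707809904014420119 * X ^ 7 +
    1116567557591130263873724640971983226 * X ^ 6 + 449870920192487212310636065974559313 * X ^ 5 +
    147287454802977076691622273657250766 * X ^ 4 + 37631477947037443122688632430253982 * X ^ 3 +
    7037012252188843123336478898960557 * X ^ 2 + 856462810536498950949758144577059 * X +
    50906107445594229615299650620593

theorem cusp_polynomial_dvd_eleven_division_polynomial :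
    (X ^ 5 + 11 * X ^ 4 + 33 * X ^ 3 - 121 * X - 121 : ℚ[X]) ∣
      (WeierstrassCurve.mk 0 11 11 33 0 : WeierstrassCurve ℚ).preΨ 11 := by
  refine ⟨elevenDivisionCofactor, ?_⟩
  rw [show (11 : ℤ) = (11 : ℕ) from rfl, preΨ_ofNat, preΨ'_eleven, preΨ'_seven, preΨ'_six,
    preΨ'_five]
  simp only [Ψ₂Sq, Ψ₃, preΨ₄, b₂, b₄, b₆, b₈, elevenDivisionCofactor]
  norm_num [map_ofNat]
  ring1
end

section
/- The polynomial X^5 + 11X^4 + 33X^3 - 121X - 121 has five distinct real roots. -/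
/-!
The polynomial takes the values `-43, 109, -1, 1, -23, 109` at `-6, -5, -3, -2, -1, 2`.
These alternate in sign, so the intermediate value theorem puts a root in each of the
five pairwise disjoint open intervals between consecutive sample points.
-/

open Set

theorem exists_mem_Ioo_eq_zero_of_mul_neg {α R : Type*} [ConditionallyCompleteLinearOrder α]
    [TopologicalSpace α] [OrderTopology α] [DenselyOrdered α] [Ring R] [LinearOrder R]
    [IsStrictOrderedRing R] [TopologicalSpace R] [OrderClosedTopology R] {f : α → R} {a b : α}
    (hab : a ≤ b) (hf : ContinuousOn f (Icc a b)) (hsign : f a * f b < 0) :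
    ∃ x ∈ Ioo a b, f x = 0 := by
  rcases mul_neg_iff.mp hsign with ⟨ha, hb⟩ | ⟨ha, hb⟩
  · exact intermediate_value_Ioo' hab hf ⟨hb, ha⟩
  · exact intermediate_value_Ioo hab hf ⟨ha, hb⟩

noncomputable def cuspPoly (x : ℝ) : ℝ :=
  x ^ 5 + 11 * x ^ 4 + 33 * x ^ 3 - 121 * x - 121

theorem continuous_cuspPoly : Continuous cuspPoly := by
  unfold cuspPoly
  fun_prop

theorem exists_cuspPoly_root_mem_Ioo {a b : ℝ} (hab : a ≤ b)
    (hsign : cuspPoly a * cuspPoly b < 0) : ∃ x ∈ Ioo a b, cuspPoly x = 0 :=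
  exists_mem_Ioo_eq_zero_of_mul_neg hab continuous_cuspPoly.continuousOn hsign

theorem cusp_polynomial_five_real_roots :
    ∃ a b c d e : ℝ, a ≠ b ∧ a ≠ c ∧ a ≠ d ∧ a ≠ e ∧ b ≠ c ∧ b ≠ d ∧ b ≠ e ∧
      c ≠ d ∧ c ≠ e ∧ d ≠ e ∧
      (∀ x ∈ ({a, b, c, d, e} : Set ℝ),
        x ^ 5 + 11 * x ^ 4 + 33 * x ^ 3 - 121 * x - 121 = 0) := by
  obtain ⟨a, ⟨-, ha⟩, hfa⟩ := exists_cuspPoly_root_mem_Ioo (a := -6) (b := -5) (by norm_num)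
    (by norm_num [cuspPoly])
  obtain ⟨b, ⟨hb, hb'⟩, hfb⟩ := exists_cuspPoly_root_mem_Ioo (a := -5) (b := -3) (by norm_num)
    (by norm_num [cuspPoly])
  obtain ⟨c, ⟨hc, hc'⟩, hfc⟩ := exists_cuspPoly_root_mem_Ioo (a := -3) (b := -2) (by norm_num)
    (by norm_num [cuspPoly])
  obtain ⟨d, ⟨hd, hd'⟩, hfd⟩ := exists_cuspPoly_root_mem_Ioo (a := -2) (b := -1) (by norm_num)
    (by norm_num [cuspPoly])
  obtain ⟨e, ⟨he, -⟩, hfe⟩ := exists_cuspPoly_root_mem_Ioo (a := -1) (b := 2) (by norm_num)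
    (by norm_num [cuspPoly])
  refine ⟨a, b, c, d, e, by linarith, by linarith, by linarith, by linarith,
    by linarith, by linarith, by linarith, by linarith, by linarith, by linarith, ?_⟩
  rintro x (rfl | rfl | rfl | rfl | rfl) <;> assumption
end

section
/- For every prime p and every rational point (x,y) on the curve Y^2 + 11Y = X^3 + 11X^2 + 33X with x ≠ 0, one has max(1, |x|_p) ≤ max(1, |y - 11/x|_p)^(2/3), where |·|_p is the p-adic absolute value. -/
/-! If `‖x‖ > 1` in an ultrametric field, `x ^ 3` dominates the right-hand side of an integral
Weierstrass equation; this forces `‖y‖ > ‖x‖`, so `y ^ 2` dominates the left-hand side and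
`‖y‖ ^ 2 = ‖x‖ ^ 3`. Then `‖c / x‖ < 1 < ‖y‖` gives `‖y - c / x‖ = ‖y‖`, and the inequality holds
with equality. If `‖x‖ ≤ 1` its left-hand side is `1`. -/

namespace IsUltrametricDist

lemma norm_add_eq_left_of_norm_lt {G : Type*} [SeminormedAddGroup G] [IsUltrametricDist G]
    {a b : G} (h : ‖b‖ < ‖a‖) : ‖a + b‖ = ‖a‖ := by
  rw [norm_add_eq_max_of_norm_ne_norm h.ne', max_eq_left h.le]

end IsUltrametricDist

open IsUltrametricDist

lemma Real.rpow_two_div_three_eq_of_sq_eq_pow_three {a b : ℝ} (ha : 0 ≤ a) (hb : 0 ≤ b)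
    (h : b ^ 2 = a ^ 3) : b ^ (2 / 3 : ℝ) = a := by
  rw [show (2 / 3 : ℝ) = ((2 : ℕ) : ℝ) * ((3 : ℕ) : ℝ)⁻¹ by norm_num, Real.rpow_natCast_mul hb, h,
    Real.pow_rpow_inv_natCast ha three_ne_zero]

variable {K : Type*} [NormedField K] [IsUltrametricDist K]

lemma norm_intCast_mul_le (n : ℤ) (z : K) : ‖(n : K) * z‖ ≤ ‖z‖ := by
  rw [norm_mul]
  exact mul_le_of_le_one_left (norm_nonneg z) (norm_intCast_le_one K n)

namespace WeierstrassCurve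

variable (W : WeierstrassCurve ℤ) {x y : K}

lemma norm_sq_eq_norm_pow_three_of_one_lt_norm (h : (W.baseChange K).toAffine.Equation x y)
    (hx : 1 < ‖x‖) : ‖y‖ ^ 2 = ‖x‖ ^ 3 := by
  rw [Affine.equation_iff] at h
  simp only [baseChange, map_a₁, map_a₂, map_a₃, map_a₄, map_a₆, algebraMap_int_eq,
    eq_intCast] at h
  have hx2 : ‖x‖ ^ 2 < ‖x‖ ^ 3 := pow_lt_pow_right₀ hx (by norm_num)
  have hrhs : ‖x ^ 3 + W.a₂ * x ^ 2 + W.a₄ * x + W.a₆‖ = ‖x‖ ^ 3 := by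
    have hlow : ‖(W.a₂ : K) * x ^ 2 + W.a₄ * x + W.a₆‖ ≤ ‖x‖ ^ 2 := by
      refine (norm_add_le_max _ _).trans (max_le ((norm_add_le_max _ _).trans (max_le ?_ ?_)) ?_)
      · exact (norm_intCast_mul_le _ _).trans (norm_pow x 2).le
      · exact (norm_intCast_mul_le W.a₄ x).trans (by nlinarith)
      · exact (norm_intCast_le_one K _).trans (by nlinarith)
    rw [show x ^ 3 + W.a₂ * x ^ 2 + W.a₄ * x + W.a₆ = x ^ 3 + (W.a₂ * x ^ 2 + W.a₄ * x + W.a₆) by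
      ring, norm_add_eq_left_of_norm_lt (by rw [norm_pow]; exact hlow.trans_lt hx2), norm_pow]
  rw [← h] at hrhs
  have hxy : ‖x‖ < ‖y‖ := by
    by_contra! hyx
    have : ‖y ^ 2 + W.a₁ * x * y + W.a₃ * y‖ ≤ ‖x‖ ^ 2 := by
      refine (norm_add_le_max _ _).trans (max_le ((norm_add_le_max _ _).trans (max_le ?_ ?_)) ?_)
      · rw [norm_pow]; exact pow_le_pow_left₀ (norm_nonneg y) hyx 2
      · rw [mul_assoc]
        refine (norm_intCast_mul_le _ _).trans ?_
        rw [norm_mul]; nlinarith [norm_nonneg x, norm_nonneg y]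
      · exact (norm_intCast_mul_le _ _).trans (by nlinarith)
    linarith
  have hy : 1 < ‖y‖ := hx.trans hxy
  have hlow : ‖(W.a₁ : K) * x * y + W.a₃ * y‖ < ‖y‖ ^ 2 := by
    refine (norm_add_le_max _ _).trans_lt (max_lt ?_ ?_)
    · rw [mul_assoc]
      refine (norm_intCast_mul_le _ _).trans_lt ?_
      rw [norm_mul]; nlinarith [norm_nonneg x, norm_nonneg y]
    · exact (norm_intCast_mul_le _ _).trans_lt (by nlinarith)
  rwa [add_assoc, norm_add_eq_left_of_norm_lt (by rwa [norm_pow]), norm_pow] at hrhs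

lemma max_one_norm_le_max_one_norm_sub_div_rpow (c : ℤ)
    (h : (W.baseChange K).toAffine.Equation x y) :
    max 1 ‖x‖ ≤ max 1 ‖y - c / x‖ ^ (2 / 3 : ℝ) := by
  rcases le_or_gt ‖x‖ 1 with hx | hx
  · rw [max_eq_left hx]
    exact Real.one_le_rpow (le_max_left _ _) (by norm_num)
  have hyx := W.norm_sq_eq_norm_pow_three_of_one_lt_norm h hx
  have hy : 1 < ‖y‖ :=
    (one_lt_pow_iff_of_nonneg (norm_nonneg y) two_ne_zero).mp (hyx ▸ one_lt_pow₀ hx three_ne_zero)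
  have hcx : ‖-(c / x)‖ < ‖y‖ := by
    rw [norm_neg, norm_div]
    exact (div_le_one_of_le₀ ((norm_intCast_le_one K c).trans hx.le) (norm_nonneg x)).trans_lt hy
  rw [max_eq_right hx.le, sub_eq_add_neg, norm_add_eq_left_of_norm_lt hcx, max_eq_right hy.le,
    Real.rpow_two_div_three_eq_of_sq_eq_pow_three (norm_nonneg _) (norm_nonneg _) hyx]

end WeierstrassCurve

theorem padic_height_inequality_general (p : ℕ) (hp : p.Prime) (x y : ℚ)
    (heq : y ^ 2 + 11 * y = x ^ 3 + 11 * x ^ 2 + 33 * x) :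
    ((max 1 (padicNorm p x) : ℚ) : ℝ) ≤
      ((max 1 (padicNorm p (y - 11 / x)) : ℚ) : ℝ) ^ ((2 : ℝ) / 3) := by
  have := Fact.mk hp
  have hE : (WeierstrassCurve.baseChange (⟨0, 11, 11, 33, 0⟩ : WeierstrassCurve ℤ)
      ℚ_[p]).toAffine.Equation (x : ℚ_[p]) y := by
    rw [WeierstrassCurve.Affine.equation_iff]
    simpa [WeierstrassCurve.baseChange] using congrArg (Rat.cast : ℚ → ℚ_[p]) heq
  simpa [← Padic.eq_padicNorm] using
    WeierstrassCurve.max_one_norm_le_max_one_norm_sub_div_rpow _ 11 hE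

theorem padic_height_inequality (p : ℕ) (hp : p.Prime) (x y : ℚ) (hx : x ≠ 0)
    (heq : y ^ 2 + 11 * y = x ^ 3 + 11 * x ^ 2 + 33 * x) :
    ((max 1 (padicNorm p x) : ℚ) : ℝ) ≤
      ((max 1 (padicNorm p (y - 11 / x)) : ℚ) : ℝ) ^ ((2 : ℝ) / 3) :=
  padic_height_inequality_general p hp x y heq
end

section
/- For every real point (x,y) on the curve Y^2 + 11Y = X^3 + 11X^2 + 33X with x ≠ 0, one has max(1, |x|) ≤ 7 · max(1, |y - 11/x|)^(2/3). -/
/-!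
Completing the square, `(y + 11/2)^2 = x^3 + 11x^2 + 33x + 121/4`. For `x < -7` the right-hand
side is negative, so real points have `x ≥ -7`, and the case `|x| ≤ 7` is trivial. For `x ≥ 7` it
gives `|y + 11/2| ≥ x^{3/2} ≥ 18`, and `y - 11/x` differs from `y + 11/2` by at most `8`, so
`7 |y - 11/x| ≥ |y + 11/2| ≥ x^{3/2}`.
-/

theorem le_mul_rpow_div_of_pow_le {a c M : ℝ} {m n : ℕ} (hn : n ≠ 0) (hc : 0 ≤ c) (hM : 0 ≤ M)
    (h : a ^ n ≤ c ^ n * M ^ m) : a ≤ c * M ^ ((m : ℝ) / n) := by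
  refine le_of_pow_le_pow_left₀ hn (by positivity) ?_
  rwa [mul_pow, ← Real.rpow_natCast (M ^ _) n, ← Real.rpow_mul hM,
    div_mul_cancel₀ _ (Nat.cast_ne_zero.2 hn), Real.rpow_natCast]

section Curve

variable {x y : ℝ}

theorem sq_add_eleven_div_two_eq (heq : y ^ 2 + 11 * y = x ^ 3 + 11 * x ^ 2 + 33 * x) :
    (y + 11 / 2) ^ 2 = x ^ 3 + 11 * x ^ 2 + 33 * x + 121 / 4 := by
  linear_combination heq

theorem neg_seven_le_of_mem_curve (heq : y ^ 2 + 11 * y = x ^ 3 + 11 * x ^ 2 + 33 * x) :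
    -7 ≤ x := by
  have hsq := sq_add_eleven_div_two_eq heq
  by_contra! hx
  nlinarith [sq_nonneg (y + 11 / 2), sq_nonneg (x + 7)]

theorem pow_three_le_sq_sub_div_of_mem_curve (hx : 7 ≤ x)
    (heq : y ^ 2 + 11 * y = x ^ 3 + 11 * x ^ 2 + 33 * x) :
    x ^ 3 ≤ 49 * (y - 11 / x) ^ 2 := by
  set u := |y + 11 / 2|
  have hxu : x ^ 3 ≤ u ^ 2 := by
    rw [sq_abs, sq_add_eleven_div_two_eq heq]
    nlinarith
  have hu : 18 ≤ u := by
    nlinarith [abs_nonneg (y + 11 / 2), pow_le_pow_left₀ (by norm_num) hx 3]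
  have hshift : |11 / 2 + 11 / x| ≤ 8 := by
    have : 11 / x ≤ 11 / 7 := div_le_div_of_nonneg_left (by norm_num) (by norm_num) hx
    rw [abs_of_pos (by positivity)]
    linarith
  have hw : u - 8 ≤ |y - 11 / x| := by
    have := abs_sub_abs_le_abs_sub (y + 11 / 2) (11 / 2 + 11 / x)
    rw [show y + 11 / 2 - (11 / 2 + 11 / x) = y - 11 / x by ring] at this
    linarith
  calc x ^ 3 ≤ u ^ 2 := hxu
    _ ≤ (7 * (u - 8)) ^ 2 := pow_le_pow_left₀ (by linarith) (by linarith) 2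
    _ ≤ (7 * |y - 11 / x|) ^ 2 := pow_le_pow_left₀ (by linarith) (by linarith) 2
    _ = 49 * (y - 11 / x) ^ 2 := by rw [mul_pow, sq_abs]; norm_num

end Curve

theorem archimedean_height_inequality_general (x y : ℝ)
    (heq : y ^ 2 + 11 * y = x ^ 3 + 11 * x ^ 2 + 33 * x) :
    max 1 |x| ≤ 7 * max 1 |y - 11 / x| ^ ((2 : ℝ) / 3) := by
  set M := max 1 |y - 11 / x|
  have hM : 1 ≤ M := le_max_left _ _
  rcases le_or_gt |x| 7 with hsmall | hlarge
  · calc max 1 |x| ≤ 7 := max_le (by norm_num) hsmall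
      _ ≤ 7 * M ^ ((2 : ℝ) / 3) := le_mul_of_one_le_right (by norm_num)
          (Real.one_le_rpow hM (by norm_num))
  have hx7 : 7 < x := by
    cases abs_cases x <;> linarith [neg_seven_le_of_mem_curve heq]
  have hcube : x ^ 3 ≤ 7 ^ 3 * M ^ 2 := by
    have hwM : (y - 11 / x) ^ 2 ≤ M ^ 2 := by
      rw [← sq_abs]
      exact pow_le_pow_left₀ (abs_nonneg _) (le_max_right _ _) 2
    nlinarith [pow_three_le_sq_sub_div_of_mem_curve hx7.le heq]
  rw [abs_of_pos (by linarith), max_eq_right (by linarith)]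
  exact_mod_cast le_mul_rpow_div_of_pow_le (m := 2) (n := 3) three_ne_zero (by norm_num)
    (by linarith) hcube

theorem archimedean_height_inequality (x y : ℝ) (hx : x ≠ 0)
    (heq : y ^ 2 + 11 * y = x ^ 3 + 11 * x ^ 2 + 33 * x) :
    max 1 |x| ≤ 7 * max 1 |y - 11 / x| ^ ((2 : ℝ) / 3) :=
  archimedean_height_inequality_general x y heq
end

section
/- For every real number x > 7 and every real y with y^2 + 11y = x^3 + 11x^2 + 33x, one has |y - 11/x| ≥ (x/7)^(3/2). -/
/-!
Put `a = x ^ (3/2)`, so `a ^ 2 = x ^ 3` and `a ≤ (x ^ 2 + x) / 2`. Completing the square,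
`(y + 11/2) ^ 2 = x ^ 3 + 11 x ^ 2 + 33 x + 121/4 ≥ (a + 11/2) ^ 2`, so either `y ≥ a` or
`y ≤ -a - 11`. In both cases `|y - 11/x| ≥ a / 7 ≥ (x/7) ^ (3/2)` once `x > 7`.
-/

namespace Real

lemma rpow_three_halves_sq {x : ℝ} (hx : 0 ≤ x) : (x ^ ((3 : ℝ) / 2)) ^ 2 = x ^ 3 := by
  rw [← rpow_mul_natCast hx]
  norm_num

lemma rpow_three_halves_le_half_sq_add_self {x : ℝ} (hx : 0 ≤ x) :
    x ^ ((3 : ℝ) / 2) ≤ (x ^ 2 + x) / 2 := by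
  have hsq := rpow_three_halves_sq hx
  have hpos : 0 ≤ x ^ ((3 : ℝ) / 2) := by positivity
  -- `((x ^ 2 + x) / 2) ^ 2 - x ^ 3 = ((x ^ 2 - x) / 2) ^ 2`
  nlinarith [sq_nonneg (x ^ 2 - x), sq_nonneg (x ^ ((3 : ℝ) / 2) - (x ^ 2 + x) / 2)]

lemma div_seven_rpow_three_halves_le {x : ℝ} (hx : 0 ≤ x) :
    (x / 7) ^ ((3 : ℝ) / 2) ≤ x ^ ((3 : ℝ) / 2) / 7 := by
  rw [div_rpow hx (by norm_num)]
  gcongr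
  exact self_le_rpow_of_one_le (by norm_num) (by norm_num)

end Real

lemma add_sq_le_of_curve {x y : ℝ} (hx : 0 ≤ x)
    (heq : y ^ 2 + 11 * y = x ^ 3 + 11 * x ^ 2 + 33 * x) :
    (x ^ ((3 : ℝ) / 2) + 11 / 2) ^ 2 ≤ (y + 11 / 2) ^ 2 := by
  have hsq := Real.rpow_three_halves_sq hx
  have hle := Real.rpow_three_halves_le_half_sq_add_self hx
  nlinarith

lemma le_or_le_neg_sub_of_curve {x y : ℝ} (hx : 0 ≤ x)
    (heq : y ^ 2 + 11 * y = x ^ 3 + 11 * x ^ 2 + 33 * x) :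
    x ^ ((3 : ℝ) / 2) ≤ y ∨ y ≤ -x ^ ((3 : ℝ) / 2) - 11 := by
  have habs := sq_le_sq.mp (add_sq_le_of_curve hx heq)
  rw [abs_of_nonneg (by positivity)] at habs
  rcases le_abs'.mp habs with h | h
  · right; linarith
  · left; linarith

theorem real_place_lower_bound (x y : ℝ) (hx : x > 7)
    (heq : y ^ 2 + 11 * y = x ^ 3 + 11 * x ^ 2 + 33 * x) :
    |y - 11 / x| ≥ (x / 7) ^ ((3 : ℝ) / 2) := by
  set a := x ^ ((3 : ℝ) / 2)
  have hxa : x ≤ a := Real.self_le_rpow_of_one_le (by linarith) (by norm_num)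
  have h11x : 11 / x < 2 := by rw [div_lt_iff₀ (by linarith)]; linarith
  have h11x_pos : 0 < 11 / x := by positivity
  suffices a / 7 ≤ |y - 11 / x| from
    (Real.div_seven_rpow_three_halves_le (by linarith)).trans this
  rcases le_or_le_neg_sub_of_curve (by linarith) heq with hy | hy
  · exact le_abs.mpr (Or.inl (by linarith))
  · exact le_abs.mpr (Or.inr (by linarith))
end

section
/- Let (x,y) be a rational point on E: Y^2 + 11Y = X^3 + 11X^2 + 33X such that 11 divides the numerator of xy (i.e., xy - 11 has 11-adic valuation ≥ 1 and x, y are 11-integral). Then 11 divides both x and y (11-adically), and the 11-adic valuation of xy - 11 is exactly 1. -/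
/-!
Pass to `ℤ_[11]`. Modulo `11` the curve reads `Y² ≡ X³`, so once `11 ∣ XY` the prime `11`, dividing
one of `X`, `Y`, divides the other as well. Then `11² ∣ XY`, and `XY - 11` has the norm of `11`
by the ultrametric inequality.
-/

theorem Prime.dvd_and_dvd_of_dvd_sq_sub_pow_three_of_dvd_mul {R : Type*} [CommRing R]
    {π X Y : R} (hπ : Prime π) (hcurve : π ∣ Y ^ 2 - X ^ 3) (hXY : π ∣ X * Y) :
    π ∣ X ∧ π ∣ Y := by
  rcases hπ.dvd_or_dvd hXY with hX | hY
  · have hY2 : π ∣ Y ^ 2 := by simpa using dvd_add hcurve (dvd_pow hX three_ne_zero)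
    exact ⟨hX, hπ.dvd_of_dvd_pow hY2⟩
  · have hX3 : π ∣ X ^ 3 := by simpa using dvd_sub (dvd_pow hY two_ne_zero) hcurve
    exact ⟨hπ.dvd_of_dvd_pow hX3, hY⟩

namespace PadicInt

variable {p : ℕ} [Fact p.Prime]

theorem exists_coe_eq_of_padicNorm_le_one {q : ℚ} (hq : padicNorm p q ≤ 1) :
    ∃ z : ℤ_[p], (z : ℚ_[p]) = q :=
  ⟨⟨q, by rw [Padic.eq_padicNorm]; exact_mod_cast hq⟩, rfl⟩

theorem norm_eq_padicNorm_of_coe_eq {z : ℤ_[p]} {q : ℚ} (h : (z : ℚ_[p]) = q) :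
    ‖z‖ = padicNorm p q := by
  rw [norm_def, h, Padic.eq_padicNorm]

theorem padicNorm_lt_one_iff_dvd_of_coe_eq {z : ℤ_[p]} {q : ℚ} (h : (z : ℚ_[p]) = q) :
    padicNorm p q < 1 ↔ (p : ℤ_[p]) ∣ z := by
  rw [← norm_lt_one_iff_dvd, norm_eq_padicNorm_of_coe_eq h]
  norm_cast

theorem norm_sub_p_of_sq_dvd {z : ℤ_[p]} (hz : (p : ℤ_[p]) ^ 2 ∣ z) :
    ‖z - p‖ = (p : ℝ)⁻¹ := by
  have hp : (p : ℝ)⁻¹ < 1 := inv_lt_one_of_one_lt₀ (mod_cast (Fact.out : p.Prime).one_lt)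
  have hlt : ‖z‖ < ‖(p : ℤ_[p])‖ := by
    obtain ⟨c, rfl⟩ := hz
    calc ‖(p : ℤ_[p]) ^ 2 * c‖ ≤ ‖(p : ℤ_[p])‖ ^ 2 := by
          rw [norm_mul, norm_pow]; exact mul_le_of_le_one_right (by positivity) (norm_le_one c)
      _ < ‖(p : ℤ_[p])‖ := by
          rw [norm_p]
          exact pow_lt_self_of_lt_one₀ (inv_pos.2 (mod_cast (Fact.out : p.Prime).pos)) hp one_lt_two
  rw [sub_eq_add_neg, norm_add_eq_max_of_ne (by rw [norm_neg]; exact hlt.ne), norm_neg,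
    max_eq_right hlt.le, norm_p]

end PadicInt

open PadicInt in
theorem eleven_adic_valuation_exactly_one (x y : ℚ)
    (hx : padicNorm 11 x ≤ 1) (hy : padicNorm 11 y ≤ 1)
    (heq : y ^ 2 + 11 * y = x ^ 3 + 11 * x ^ 2 + 33 * x)
    (h11 : padicNorm 11 (x * y - 11) < 1) :
    padicNorm 11 x < 1 ∧ padicNorm 11 y < 1 ∧
      padicNorm 11 (x * y - 11) = 1 / 11 := by
  have : Fact (Nat.Prime 11) := ⟨by norm_num⟩
  obtain ⟨X, hX⟩ := exists_coe_eq_of_padicNorm_le_one hx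
  obtain ⟨Y, hY⟩ := exists_coe_eq_of_padicNorm_le_one hy
  have hXY : ((X * Y - 11 : ℤ_[11]) : ℚ_[11]) = (x * y - 11 : ℚ) := by
    push_cast [hX, hY]; rfl
  have hcurve : Y ^ 2 + 11 * Y = X ^ 3 + 11 * X ^ 2 + 33 * X := PadicInt.ext <| by
    have := congrArg ((↑) : ℚ → ℚ_[11]) heq
    push_cast [← hX, ← hY] at this ⊢
    exact this
  have hdvd := (padicNorm_lt_one_iff_dvd_of_coe_eq hXY).1 h11
  obtain ⟨hX11, hY11⟩ : ((11 : ℕ) : ℤ_[11]) ∣ X ∧ ((11 : ℕ) : ℤ_[11]) ∣ Y :=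
    prime_p.dvd_and_dvd_of_dvd_sq_sub_pow_three_of_dvd_mul
      ⟨X ^ 2 + 3 * X - Y, by push_cast; linear_combination hcurve⟩
      (by simpa using dvd_add hdvd (dvd_refl _))
  refine ⟨(padicNorm_lt_one_iff_dvd_of_coe_eq hX).2 hX11,
    (padicNorm_lt_one_iff_dvd_of_coe_eq hY).2 hY11, ?_⟩
  have := norm_sub_p_of_sq_dvd (pow_two ((11 : ℕ) : ℤ_[11]) ▸ mul_dvd_mul hX11 hY11)
  simp only [Nat.cast_ofNat, norm_eq_padicNorm_of_coe_eq hXY] at this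
  exact Rat.cast_injective (α := ℝ) (by rw [this]; norm_num)
end

section
/- The point P_0 = (0,0) on the elliptic curve E: Y^2 + 11Y = X^3 + 11X^2 + 33X is not a torsion point; i.e., mP_0 is not the identity for any nonzero integer m. -/
/-!
Call a point `(x, y)` of a Weierstrass curve over `ℚ` of 2-adic size `u` when `|x|₂ = u²` and
`|y|₂ = u³`. On a curve with `a₁ = 0` and 2-integral `a₂, a₃, a₄`, doubling a point of size
`u ≥ 2` gives a point of size exactly `2u`: the tangent slope has numerator of size `u⁴`
(dominated by `3x²`) and denominator `2y + a₃` of size `u³/2`, so it has size `2u`, and then `x²`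
resp. `ℓ³` dominate the remaining terms of the doubling formulas. For 121B1 the point
`3P₀ = (-11/4, -33/8)` has size `2`, hence `3·2ᵏP₀` has size `2ᵏ⁺¹`. These multiples are therefore
pairwise distinct, and `P₀` has infinite order.
-/

open WeierstrassCurve.Affine

theorem padicNorm_add_eq_left {p : ℕ} [Fact p.Prime] {q r : ℚ}
    (h : padicNorm p r < padicNorm p q) : padicNorm p (q + r) = padicNorm p q := by
  rw [padicNorm.add_eq_max_of_ne h.ne', max_eq_left h.le]

theorem padicNorm_two : padicNorm 2 (2 : ℚ) = 1 / 2 := by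
  simpa using padicNorm.padicNorm_p_of_prime (p := 2)

theorem not_isOfFinAddOrder_of_injective_nsmul_comp {G : Type*} [AddGroup G] {g : G} {f : ℕ → ℕ}
    (hf : Function.Injective fun k => f k • g) : ¬IsOfFinAddOrder g :=
  infinite_zmultiples.mp
    (Set.infinite_of_injective_forall_mem hf fun k => ⟨f k, natCast_zsmul g (f k)⟩)

namespace WeierstrassCurve

variable {W : WeierstrassCurve ℚ}

def HasTwoAdicSize (P : W.toAffine.Point) (u : ℚ) : Prop :=
  ∃ x y, ∃ h : W.toAffine.Nonsingular x y,
    P = .some x y h ∧ padicNorm 2 x = u ^ 2 ∧ padicNorm 2 y = u ^ 3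

theorem HasTwoAdicSize.eq {P : W.toAffine.Point} {u v : ℚ} (hu : HasTwoAdicSize P u)
    (hv : HasTwoAdicSize P v) (hu₀ : 0 ≤ u) (hv₀ : 0 ≤ v) : u = v := by
  obtain ⟨x, y, h, rfl, hx, -⟩ := hu
  obtain ⟨x', y', h', he, hx', -⟩ := hv
  obtain ⟨rfl, -⟩ := (Point.some.injEq ..).mp he
  exact (pow_left_inj₀ hu₀ hv₀ two_ne_zero).mp (hx.symm.trans hx')

section Doubling

variable {x y u : ℚ}

theorem padicNorm_sub_negY (ha₁ : W.a₁ = 0) (ha₃ : padicNorm 2 W.a₃ ≤ 1)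
    (hy : padicNorm 2 y = u ^ 3) (hu : 2 ≤ u) :
    padicNorm 2 (y - W.toAffine.negY x y) = u ^ 3 / 2 := by
  have hu3 : 2 ^ 3 ≤ u ^ 3 := pow_le_pow_left₀ (by norm_num) hu 3
  have h2y : padicNorm 2 (2 * y) = u ^ 3 / 2 := by
    rw [padicNorm.mul, padicNorm_two, hy]
    ring
  rw [negY, ha₁, show y - (-y - 0 * x - W.a₃) = 2 * y + W.a₃ by ring,
    padicNorm_add_eq_left (by linarith), h2y]

theorem padicNorm_slope_self (ha₁ : W.a₁ = 0) (ha₂ : padicNorm 2 W.a₂ ≤ 1)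
    (ha₃ : padicNorm 2 W.a₃ ≤ 1) (ha₄ : padicNorm 2 W.a₄ ≤ 1)
    (hx : padicNorm 2 x = u ^ 2) (hy : padicNorm 2 y = u ^ 3) (hu : 2 ≤ u)
    (hyne : y ≠ W.toAffine.negY x y) :
    padicNorm 2 (W.toAffine.slope x x y y) = 2 * u := by
  have hu2 : 2 ^ 2 ≤ u ^ 2 := pow_le_pow_left₀ (by norm_num) hu 2
  have h3x2 : padicNorm 2 (3 * x ^ 2) = u ^ 4 := by
    rw [padicNorm.mul, IsAbsoluteValue.abv_pow (padicNorm 2), hx,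
      show (3 : ℚ) = (3 : ℕ) by norm_num, (padicNorm.nat_eq_one_iff 3).mpr (by norm_num)]
    ring
  have hlow : padicNorm 2 (2 * W.a₂ * x + W.a₄) < u ^ 4 := by
    refine padicNorm.nonarchimedean.trans_lt (max_lt ?_ (by nlinarith))
    rw [padicNorm.mul, padicNorm.mul, padicNorm_two, hx]
    nlinarith [padicNorm.nonneg (p := 2) W.a₂]
  have hnum : padicNorm 2 (3 * x ^ 2 + 2 * W.a₂ * x + W.a₄ - W.a₁ * y) = u ^ 4 := by
    rw [ha₁, zero_mul, sub_zero, add_assoc, padicNorm_add_eq_left (h3x2 ▸ hlow), h3x2]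
  rw [slope_of_Y_ne rfl hyne, padicNorm.div, hnum, padicNorm_sub_negY ha₁ ha₃ hy hu]
  field_simp

theorem padicNorm_addX_self {ℓ : ℚ} (ha₁ : W.a₁ = 0) (ha₂ : padicNorm 2 W.a₂ ≤ 1)
    (hx : padicNorm 2 x = u ^ 2) (hℓ : padicNorm 2 ℓ = 2 * u) (hu : 2 ≤ u) :
    padicNorm 2 (W.toAffine.addX x x ℓ) = (2 * u) ^ 2 := by
  have hu2 : 2 ^ 2 ≤ u ^ 2 := pow_le_pow_left₀ (by norm_num) hu 2
  have hℓ2 : padicNorm 2 (ℓ ^ 2) = (2 * u) ^ 2 := by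
    rw [IsAbsoluteValue.abv_pow (padicNorm 2), hℓ]
  have hlow : padicNorm 2 (-(W.a₂ + 2 * x)) < (2 * u) ^ 2 := by
    rw [padicNorm.neg]
    refine padicNorm.nonarchimedean.trans_lt (max_lt (by nlinarith) ?_)
    rw [padicNorm.mul, padicNorm_two, hx]
    nlinarith
  rw [addX, ha₁, show ℓ ^ 2 + 0 * ℓ - W.a₂ - x - x = ℓ ^ 2 + -(W.a₂ + 2 * x) by ring,
    padicNorm_add_eq_left (hℓ2 ▸ hlow), hℓ2]

theorem padicNorm_addY_self {ℓ : ℚ} (ha₁ : W.a₁ = 0) (ha₂ : padicNorm 2 W.a₂ ≤ 1)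
    (ha₃ : padicNorm 2 W.a₃ ≤ 1) (hx : padicNorm 2 x = u ^ 2) (hy : padicNorm 2 y = u ^ 3)
    (hℓ : padicNorm 2 ℓ = 2 * u) (hu : 2 ≤ u) :
    padicNorm 2 (W.toAffine.addY x x y ℓ) = (2 * u) ^ 3 := by
  set x' := W.toAffine.addX x x ℓ
  have hx' : padicNorm 2 x' = (2 * u) ^ 2 := padicNorm_addX_self ha₁ ha₂ hx hℓ hu
  have hu2 : 2 ^ 2 ≤ u ^ 2 := pow_le_pow_left₀ (by norm_num) hu 2
  have hu3 : 2 ^ 3 ≤ u ^ 3 := pow_le_pow_left₀ (by norm_num) hu 3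
  have hdiff : padicNorm 2 (x' + -x) = (2 * u) ^ 2 := by
    rw [padicNorm_add_eq_left (by rw [padicNorm.neg, hx, hx']; nlinarith), hx']
  have hmain : padicNorm 2 (-(ℓ * (x' + -x))) = (2 * u) ^ 3 := by
    rw [padicNorm.neg, padicNorm.mul, hℓ, hdiff]
    ring
  have hlow : padicNorm 2 (-(y + W.a₃)) < (2 * u) ^ 3 := by
    rw [padicNorm.neg]
    exact padicNorm.nonarchimedean.trans_lt (max_lt (by nlinarith) (by nlinarith))
  rw [addY, negY, negAddY, ha₁,
    show -(ℓ * (x' - x) + y) - 0 * x' - W.a₃ = -(ℓ * (x' + -x)) + -(y + W.a₃) by ring,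
    padicNorm_add_eq_left (hmain ▸ hlow), hmain]

theorem HasTwoAdicSize.two_nsmul (ha₁ : W.a₁ = 0) (ha₂ : padicNorm 2 W.a₂ ≤ 1)
    (ha₃ : padicNorm 2 W.a₃ ≤ 1) (ha₄ : padicNorm 2 W.a₄ ≤ 1) {P : W.toAffine.Point}
    (hP : HasTwoAdicSize P u) (hu : 2 ≤ u) : HasTwoAdicSize (2 • P) (2 * u) := by
  obtain ⟨x, y, h, rfl, hx, hy⟩ := hP
  have hyne : y ≠ W.toAffine.negY x y := by
    intro hyy
    have hden := padicNorm_sub_negY (x := x) ha₁ ha₃ hy hu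
    rw [← hyy, sub_self, padicNorm.zero] at hden
    nlinarith
  have hℓ := padicNorm_slope_self ha₁ ha₂ ha₃ ha₄ hx hy hu hyne
  exact ⟨_, _, _, by rw [_root_.two_nsmul, Point.add_self_of_Y_ne hyne],
    padicNorm_addX_self ha₁ ha₂ hx hℓ hu, padicNorm_addY_self ha₁ ha₂ ha₃ hx hy hℓ hu⟩

end Doubling

section Curve121B1

variable (h₀ : W.toAffine.Nonsingular 0 0)

theorem three_nsmul_eq_121B1 (hW : W = ⟨0, 11, 11, 33, 0⟩) :
    ∃ h : W.toAffine.Nonsingular (-11 / 4) (-33 / 8), 3 • Point.some 0 0 h₀ = .some _ _ h := by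
  subst hW
  have h₂ : (⟨0, 11, 11, 33, 0⟩ : WeierstrassCurve ℚ).toAffine.Nonsingular (-2) (-5) := by
    norm_num [nonsingular_iff, equation_iff]
  have h₃ :
      (⟨0, 11, 11, 33, 0⟩ : WeierstrassCurve ℚ).toAffine.Nonsingular (-11 / 4) (-33 / 8) := by
    norm_num [nonsingular_iff, equation_iff]
  have hy₀ : (0 : ℚ) ≠ (⟨0, 11, 11, 33, 0⟩ : WeierstrassCurve ℚ).toAffine.negY 0 0 := by
    norm_num
  have hx₂ : (-2 : ℚ) ≠ 0 := by norm_num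
  have e₂ : 2 • Point.some 0 0 h₀ = .some _ _ h₂ := by
    rw [two_nsmul, Point.add_self_of_Y_ne hy₀, Point.some.injEq]
    norm_num [slope_of_Y_ne rfl hy₀, addY]
  refine ⟨h₃, ?_⟩
  rw [succ_nsmul, e₂, Point.add_of_X_ne hx₂, Point.some.injEq]
  norm_num [slope_of_X_ne hx₂, addY]

theorem hasTwoAdicSize_three_nsmul_121B1 (hW : W = ⟨0, 11, 11, 33, 0⟩) :
    HasTwoAdicSize (3 • Point.some 0 0 h₀) 2 := by
  obtain ⟨h₃, e⟩ := three_nsmul_eq_121B1 h₀ hW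
  have h11 : padicNorm 2 (11 : ℚ) = 1 := by
    exact_mod_cast (padicNorm.nat_eq_one_iff (p := 2) 11).mpr (by norm_num)
  have h33 : padicNorm 2 (33 : ℚ) = 1 := by
    exact_mod_cast (padicNorm.nat_eq_one_iff (p := 2) 33).mpr (by norm_num)
  refine ⟨_, _, h₃, e, ?_, ?_⟩
  · rw [neg_div, padicNorm.neg, padicNorm.div, h11, show (4 : ℚ) = 2 ^ 2 by norm_num,
      IsAbsoluteValue.abv_pow (padicNorm 2), padicNorm_two]
    norm_num
  · rw [neg_div, padicNorm.neg, padicNorm.div, h33, show (8 : ℚ) = 2 ^ 3 by norm_num,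
      IsAbsoluteValue.abv_pow (padicNorm 2), padicNorm_two]
    norm_num

theorem hasTwoAdicSize_three_mul_two_pow_nsmul_121B1 (hW : W = ⟨0, 11, 11, 33, 0⟩) (k : ℕ) :
    HasTwoAdicSize ((3 * 2 ^ k) • Point.some 0 0 h₀) (2 ^ (k + 1)) := by
  induction k with
  | zero => simpa using hasTwoAdicSize_three_nsmul_121B1 h₀ hW
  | succ k ih =>
    subst hW
    have h11 : padicNorm 2 (11 : ℚ) ≤ 1 := by exact_mod_cast padicNorm.of_nat (p := 2) 11
    have h33 : padicNorm 2 (33 : ℚ) ≤ 1 := by exact_mod_cast padicNorm.of_nat (p := 2) 33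
    have hk : (2 : ℚ) ≤ 2 ^ (k + 1) := le_self_pow₀ one_le_two k.succ_ne_zero
    rw [pow_succ 2 (k + 1), mul_comm _ 2, show 3 * 2 ^ (k + 1) = 2 * (3 * 2 ^ k) by ring,
      mul_nsmul']
    exact ih.two_nsmul rfl h11 h11 h33 hk

theorem injective_three_mul_two_pow_nsmul_121B1 (hW : W = ⟨0, 11, 11, 33, 0⟩) :
    Function.Injective fun k : ℕ => (3 * 2 ^ k) • Point.some 0 0 h₀ := by
  intro i j (hij : (3 * 2 ^ i) • _ = (3 * 2 ^ j) • _)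
  have hj := hasTwoAdicSize_three_mul_two_pow_nsmul_121B1 h₀ hW j
  rw [← hij] at hj
  have hsize := (hasTwoAdicSize_three_mul_two_pow_nsmul_121B1 h₀ hW i).eq hj
    (by positivity) (by positivity)
  exact Nat.succ_injective (pow_right_injective₀ two_pos (by norm_num) hsize)

end Curve121B1

end WeierstrassCurve

theorem generator_not_torsion
    (W : WeierstrassCurve ℚ) (hW : W = WeierstrassCurve.mk 0 11 11 33 0)
    (h0 : W.toAffine.Nonsingular 0 0) :
    ∀ m : ℤ, m ≠ 0 → m • Point.some _ _ h0 ≠ 0 := by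
  intro m hm hmP
  exact not_isOfFinAddOrder_of_injective_nsmul_comp
    (W.injective_three_mul_two_pow_nsmul_121B1 h0 hW)
    (isOfFinAddOrder_iff_zsmul_eq_zero.mpr ⟨m, hm, hmP⟩)
end
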